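/- For every z ∈ ℂ∖[−1,1], (1/π) ∫_{−1}^{1} log|t−z| · t/√(1−t²) dt = −Re( J₊⁻¹(z) ). -/

import Mathlib

open MeasureTheory Filter Set

/-- The inverse Joukowsky transform mapping the slit plane to the unit disk,
`J₊⁻¹(z) = z - (z-1)^{1/2} (z+1)^{1/2}` with principal-branch square roots. -/
noncomputable def Jinv (z : ℂ) : ℂ :=
  z - (z - 1) ^ ((1 : ℂ) / 2) * (z + 1) ^ ((1 : ℂ) / 2)

/-!
With `w = J₊⁻¹(z)` one has `w² + 1 = 2zw`, hence `1 - 2wt + w² = 2w(z - t)`. Writing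
`a = (z-1)^{1/2}`, `b = (z+1)^{1/2}`, we get `w = (a - b)²/2` and `1/w = (a + b)²/2`; off the slit
the principal roots `a`, `b` make an acute angle, so `|a - b| < |a + b|` and `|w| < 1`.
Substituting `t = cos θ` turns the transform into `(1/π) ∫₀^π log |cos θ - z| cos θ dθ`, and
factoring `1 - 2w cos θ + w² = (1 - we^{iθ})(1 - we^{-iθ})` gives the Fourier expansion
`log |1 - 2w cos θ + w²| = -∑ₙ (2/n) Re(wⁿ) cos nθ`. Against `cos θ` only the term `n = 1`
survives, contributing `-π Re w`, while the constant `-log (2|w|)` integrates to zero.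
-/

open Real Polynomial.Chebyshev ComplexConjugate

theorem norm_sub_lt_norm_add_of_re_inner_pos {𝕜 E : Type*} [RCLike 𝕜] [NormedAddCommGroup E]
    [InnerProductSpace 𝕜 E] {x y : E} (h : 0 < RCLike.re (inner 𝕜 x y)) :
    ‖x - y‖ < ‖x + y‖ :=
  lt_of_pow_lt_pow_left₀ 2 (norm_nonneg _) <| by
    rw [norm_sub_sq (𝕜 := 𝕜), norm_add_sq (𝕜 := 𝕜)]; linarith

theorem abs_arg_sub_arg_lt_pi_of_im_eq {u v : ℂ} (h : u.im = v.im) (h₀ : u.im ≠ 0) :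
    |Complex.arg u - Complex.arg v| < π := by
  rw [abs_sub_lt_iff]
  rcases h₀.lt_or_gt with hneg | hpos
  · have hu := Complex.arg_neg_iff.2 hneg
    have hv := Complex.arg_neg_iff.2 (h ▸ hneg)
    constructor <;> linarith [Complex.neg_pi_lt_arg u, Complex.neg_pi_lt_arg v]
  · have hu := Complex.arg_lt_pi_iff.2 (Or.inr hpos.ne')
    have hv := Complex.arg_lt_pi_iff.2 (Or.inr (h ▸ hpos.ne'))
    constructor <;>
      linarith [Complex.arg_nonneg_iff.2 hpos.le, Complex.arg_nonneg_iff.2 (h ▸ hpos.le)]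

theorem abs_arg_add_one_sub_arg_sub_one_lt_pi {z : ℂ} (hz : z ∉ Complex.ofReal '' Icc (-1) 1) :
    |Complex.arg (z + 1) - Complex.arg (z - 1)| < π := by
  by_cases him : z.im = 0
  · obtain ⟨x, rfl⟩ : ∃ x : ℝ, (x : ℂ) = z := ⟨z.re, Complex.ext (by simp) (by simp [him])⟩
    have hx : x < -1 ∨ 1 < x := by
      by_contra! h
      exact hz ⟨x, h, rfl⟩
    rw [← Complex.ofReal_one, ← Complex.ofReal_add, ← Complex.ofReal_sub]
    rcases hx with hx | hx
    · rw [Complex.arg_ofReal_of_neg (by linarith), Complex.arg_ofReal_of_neg (by linarith)]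
      simpa using pi_pos
    · rw [Complex.arg_ofReal_of_nonneg (by linarith), Complex.arg_ofReal_of_nonneg (by linarith)]
      simpa using pi_pos
  · exact abs_arg_sub_arg_lt_pi_of_im_eq (by simp) (by simpa using him)

theorem cpow_one_div_two_sq (u : ℂ) : (u ^ ((1 : ℂ) / 2)) ^ 2 = u := by
  rw [one_div]; exact Complex.cpow_ofNat_inv_pow u 2

theorem re_conj_cpow_one_div_two_mul_pos {u v : ℂ} (hu : u ≠ 0) (hv : v ≠ 0)
    (h : |Complex.arg v - Complex.arg u| < π) :
    0 < (conj (u ^ ((1 : ℂ) / 2)) * v ^ ((1 : ℂ) / 2)).re := by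
  rw [Complex.cpow_def_of_ne_zero hu, Complex.cpow_def_of_ne_zero hv, ← Complex.exp_conj,
    ← Complex.exp_add, Complex.exp_re]
  refine mul_pos (exp_pos _) (cos_pos_of_mem_Ioo ?_)
  have him : (conj (Complex.log u * (1 / 2)) + Complex.log v * (1 / 2)).im
      = (Complex.arg v - Complex.arg u) / 2 := by
    simp [Complex.log_im, neg_add_eq_sub, div_eq_mul_inv, sub_mul]
  rw [him]
  constructor <;> linarith [abs_lt.1 h]

section Jinv

variable (z : ℂ)

theorem Jinv_eq_sq_div_two :
    Jinv z = ((z - 1) ^ ((1 : ℂ) / 2) - (z + 1) ^ ((1 : ℂ) / 2)) ^ 2 / 2 := by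
  rw [Jinv]
  linear_combination (-1 / 2 : ℂ) * cpow_one_div_two_sq (z + 1) -
    (1 / 2 : ℂ) * cpow_one_div_two_sq (z - 1)

theorem Jinv_mul_sq_add_div_two :
    Jinv z * (((z - 1) ^ ((1 : ℂ) / 2) + (z + 1) ^ ((1 : ℂ) / 2)) ^ 2 / 2) = 1 := by
  rw [Jinv_eq_sq_div_two]
  set a := (z - 1) ^ ((1 : ℂ) / 2)
  set b := (z + 1) ^ ((1 : ℂ) / 2)
  linear_combination (1 / 4 : ℂ) * (b ^ 2 - a ^ 2 + 2) *
    (cpow_one_div_two_sq (z + 1) - cpow_one_div_two_sq (z - 1))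

theorem Jinv_ne_zero : Jinv z ≠ 0 :=
  left_ne_zero_of_mul_eq_one (Jinv_mul_sq_add_div_two z)

theorem Jinv_sq_add_one : Jinv z ^ 2 + 1 = 2 * z * Jinv z := by
  rw [Jinv]
  linear_combination (z + 1) * cpow_one_div_two_sq (z - 1) +
    ((z - 1) ^ ((1 : ℂ) / 2)) ^ 2 * cpow_one_div_two_sq (z + 1)

end Jinv

theorem norm_Jinv_lt_one {z : ℂ} (hz : z ∉ Complex.ofReal '' Icc (-1) 1) : ‖Jinv z‖ < 1 := by
  have hz₁ : z - 1 ≠ 0 := fun h ↦ hz ⟨1, by norm_num, by push_cast; linear_combination -h⟩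
  have hz₂ : z + 1 ≠ 0 := fun h ↦ hz ⟨-1, by norm_num, by push_cast; linear_combination -h⟩
  have hmul := congrArg norm (Jinv_mul_sq_add_div_two z)
  rw [Jinv_eq_sq_div_two] at hmul ⊢
  set a := (z - 1) ^ ((1 : ℂ) / 2)
  set b := (z + 1) ^ ((1 : ℂ) / 2)
  have hab : ‖a - b‖ < ‖a + b‖ := norm_sub_lt_norm_add_of_re_inner_pos (𝕜 := ℂ) <| by
    rw [RCLike.inner_apply']
    exact re_conj_cpow_one_div_two_mul_pos hz₁ hz₂ (abs_arg_add_one_sub_arg_sub_one_lt_pi hz)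
  simp only [norm_mul, norm_div, norm_pow, Complex.norm_two, norm_one] at hmul ⊢
  nlinarith [norm_nonneg (a - b)]

theorem log_norm_one_sub_two_mul_add_sq {z w x : ℂ} (hw : w ≠ 0) (hwz : w ^ 2 + 1 = 2 * z * w)
    (hx : x ≠ z) : log ‖1 - 2 * w * x + w ^ 2‖ = log (2 * ‖w‖) + log ‖x - z‖ := by
  rw [show 1 - 2 * w * x + w ^ 2 = 2 * w * (z - x) by linear_combination hwz, norm_mul, norm_mul,
    Complex.norm_two, norm_sub_rev, log_mul (by positivity) (norm_ne_zero_iff.2 (sub_ne_zero.2 hx))]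

theorem hasSum_log_norm_one_sub_two_mul_cos_add_sq {w : ℂ} (hw : ‖w‖ < 1) (θ : ℝ) :
    HasSum (fun n : ℕ ↦ -(2 * (w ^ n).re / n * cos (n * θ)))
      (log ‖1 - 2 * w * cos θ + w ^ 2‖) := by
  set e := Complex.exp (θ * Complex.I)
  have he : ‖e‖ = 1 := Complex.norm_exp_ofReal_mul_I θ
  have hcos (n : ℕ) : e ^ n + e⁻¹ ^ n = 2 * cos (n * θ) := by
    rw [inv_pow, ← Complex.exp_nat_mul, ← Complex.exp_neg]
    push_cast
    rw [Complex.two_cos]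
    ring_nf
  have h₁ : ‖w * e‖ < 1 := by simpa [he] using hw
  have h₂ : ‖w * e⁻¹‖ < 1 := by simpa [he] using hw
  have hfac : 1 - 2 * w * cos θ + w ^ 2 = (1 - w * e) * (1 - w * e⁻¹) := by
    linear_combination w * (by simpa using hcos 1 : e + e⁻¹ = 2 * cos θ) -
      w ^ 2 * mul_inv_cancel₀ (Complex.exp_ne_zero _)
  have hne {u : ℂ} (hu : ‖u‖ < 1) : 1 - u ≠ 0 := by
    rw [sub_ne_zero]; rintro rfl; simp at hu
  convert Complex.hasSum_re
    ((Complex.hasSum_taylorSeries_neg_log h₁).add (Complex.hasSum_taylorSeries_neg_log h₂)).neg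
    using 1
  · funext n
    rw [← add_div, mul_pow, mul_pow, ← mul_add, hcos,
      show w ^ n * (2 * (cos (n * θ) : ℂ)) / n = w ^ n * ((2 * cos (n * θ) / n : ℝ) : ℂ) by
        push_cast; ring,
      Complex.neg_re, Complex.re_mul_ofReal]
    ring
  · rw [hfac, norm_mul, log_mul (norm_ne_zero_iff.2 (hne h₁)) (norm_ne_zero_iff.2 (hne h₂))]
    simp [Complex.log_re, add_comm]

theorem integral_cos_nat_mul_mul_cos (n : ℕ) :
    ∫ θ in 0..π, cos (n * θ) * cos θ = if n = 1 then π / 2 else 0 := by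
  have h := integral_measureT_eq_integral_cos (f := fun x ↦ (T ℝ n).eval x * (T ℝ 1).eval x)
  simp only [T_real_cos, Int.cast_natCast, Int.cast_one, one_mul] at h
  rw [← h]
  split_ifs with hn
  · subst hn
    exact integral_T_real_mul_self_measureT_of_ne_zero one_ne_zero
  · exact_mod_cast integral_eval_T_real_mul_eval_T_real_measureT_of_ne hn

theorem integral_log_norm_one_sub_two_mul_cos_add_sq_mul_cos {w : ℂ} (hw : ‖w‖ < 1) :
    ∫ θ in 0..π, log ‖1 - 2 * w * cos θ + w ^ 2‖ * cos θ = -(π * w.re) := by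
  have hbound (n : ℕ) (θ : ℝ) :
      ‖-(2 * (w ^ n).re / n * cos (n * θ)) * cos θ‖ ≤ 2 * ‖w‖ ^ n := by
    have hre : |(w ^ n).re| ≤ ‖w‖ ^ n := (Complex.abs_re_le_norm _).trans (norm_pow _ _).le
    rcases n.eq_zero_or_pos with rfl | hn
    · simp
    have hn : (1 : ℝ) ≤ n := by exact_mod_cast hn
    simp only [norm_mul, norm_neg, norm_div, Real.norm_eq_abs, abs_two, Nat.abs_cast]
    calc 2 * |(w ^ n).re| / n * |cos (n * θ)| * |cos θ| ≤ 2 * |(w ^ n).re| / 1 * 1 * 1 := by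
          gcongr <;> exact abs_cos_le_one _
      _ ≤ 2 * ‖w‖ ^ n := by linarith
  have hsum : HasSum (fun n : ℕ ↦ ∫ θ in 0..π, -(2 * (w ^ n).re / n * cos (n * θ)) * cos θ)
      (∫ θ in 0..π, log ‖1 - 2 * w * cos θ + w ^ 2‖ * cos θ) :=
    intervalIntegral.hasSum_integral_of_dominated_convergence (fun n _ ↦ 2 * ‖w‖ ^ n)
      (fun n ↦ (by fun_prop : Continuous _).aestronglyMeasurable)
      (fun n ↦ ae_of_all _ fun θ _ ↦ hbound n θ)
      (ae_of_all _ fun _ _ ↦ (summable_geometric_of_lt_one (norm_nonneg w) hw).mul_left 2)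
      intervalIntegrable_const
      (ae_of_all _ fun θ _ ↦ (hasSum_log_norm_one_sub_two_mul_cos_add_sq hw θ).mul_right (cos θ))
  have hterm (n : ℕ) : ∫ θ in 0..π, -(2 * (w ^ n).re / n * cos (n * θ)) * cos θ
      = if n = 1 then -(π * w.re) else 0 := by
    simp_rw [neg_mul, mul_assoc]
    rw [intervalIntegral.integral_neg, intervalIntegral.integral_const_mul,
      integral_cos_nat_mul_mul_cos]
    split_ifs with h
    · subst h; simp only [pow_one, Nat.cast_one, div_one]; ring
    · simp
  simp_rw [hterm] at hsum
  exact hsum.unique (hasSum_ite_eq 1 _)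

theorem integral_log_norm_cos_sub_mul_cos {z : ℂ} (hz : z ∉ Complex.ofReal '' Icc (-1) 1) :
    ∫ θ in 0..π, log ‖(cos θ : ℂ) - z‖ * cos θ = -(π * (Jinv z).re) := by
  have hcos (θ : ℝ) : (cos θ : ℂ) ≠ z := fun h ↦ hz ⟨cos θ, ⟨neg_one_le_cos θ, cos_le_one θ⟩, h⟩
  have hsplit (θ : ℝ) : log ‖1 - 2 * Jinv z * cos θ + Jinv z ^ 2‖ * cos θ
      = log (2 * ‖Jinv z‖) * cos θ + log ‖(cos θ : ℂ) - z‖ * cos θ := by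
    rw [← add_mul, log_norm_one_sub_two_mul_add_sq (Jinv_ne_zero z) (Jinv_sq_add_one z) (hcos θ)]
  have hcont : Continuous fun θ : ℝ ↦ log ‖(cos θ : ℂ) - z‖ * cos θ :=
    ((by fun_prop : Continuous fun θ : ℝ ↦ ‖(cos θ : ℂ) - z‖).log
      fun θ ↦ norm_ne_zero_iff.2 (sub_ne_zero.2 (hcos θ))).mul continuous_cos
  have h := integral_log_norm_one_sub_two_mul_cos_add_sq_mul_cos (norm_Jinv_lt_one hz)
  simp_rw [hsplit] at h
  rw [intervalIntegral.integral_add ((by fun_prop : Continuous _).intervalIntegrable _ _) (hcont.intervalIntegrable _ _),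
    intervalIntegral.integral_const_mul, integral_cos] at h
  simpa using h

/-- Log transform of `t/√(1-t²)`:
`ℒ[t/√(1-t²)](z) = -Re(J₊⁻¹(z))` for `z ∈ ℂ∖[-1,1]`. -/
theorem log_transform_t_inv_sqrt (z : ℂ)
    (hz : z ∉ Complex.ofReal '' Set.Icc (-1 : ℝ) 1) :
    ((1 / Real.pi) *
        ∫ t in (-1 : ℝ)..1,
          Real.log ‖(t : ℂ) - z‖ * (t / Real.sqrt (1 - t ^ 2)))
      = -(Jinv z).re := by
  have hsubst : ∫ t in (-1 : ℝ)..1, log ‖(t : ℂ) - z‖ * (t / √(1 - t ^ 2))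
      = ∫ θ in 0..π, log ‖(cos θ : ℂ) - z‖ * cos θ := by
    rw [← integral_measureT_eq_integral_cos (f := fun t ↦ log ‖(t : ℂ) - z‖ * t),
      integral_measureT]
    simp only [div_eq_mul_inv, mul_assoc, sqrt_inv]
  rw [hsubst, integral_log_norm_cos_sub_mul_cos hz]
  field_simp
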